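/- Fix α ∈ (0,1). There exist constants c, C > 0 (depending on α, λ_e and λ) such that for all sufficiently large n, in the complete bipartite graph K_{L,R} with |L| = ⌈n^α⌉ and |R| = n − ⌈n^α⌉, every vertex j ∈ R satisfies c·n^{1−α} ≤ v_{K_{L,R}}(j) ≤ C·n^{1−α}·log n. -/

import Mathlib

open Finset
open scoped Classical

/-- Transmission rate from node `i` into the set `S`: `λ·|N(i) ∩ S|/deg(i)`,
interpreted as `0` when `deg(i) = 0`. -/
noncomputable def rate {n : ℕ} (lam : ℝ) (G : SimpleGraph (Fin n))
    (S : Finset (Fin n)) (i : Fin n) : ℝ :=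
  if G.degree i = 0 then 0
  else lam * ((G.neighborFinset i ∩ S).card : ℝ) / (G.degree i : ℝ)

/-- The version age `v_G(S)`, defined by downward recursion on `n - |S|`. -/
noncomputable def vAge (lam_e lam : ℝ) {n : ℕ} (G : SimpleGraph (Fin n))
    (S : Finset (Fin n)) : ℝ :=
  (lam_e + ∑ i ∈ Sᶜ.attach, rate lam G S i.1 * vAge lam_e lam G (insert i.1 S)) /
    (lam * (S.card : ℝ) / (n : ℝ) + ∑ i ∈ Sᶜ, rate lam G S i)
termination_by Sᶜ.card
decreasing_by
  have hi := i.2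
  rw [Finset.compl_insert]
  exact Finset.card_erase_lt_of_mem hi

/-- The complete bipartite graph on `Fin n` whose left part consists of the
first `L` vertices. -/
def biGraph (n L : ℕ) : SimpleGraph (Fin n) where
  Adj i j := (i.val < L) ≠ (j.val < L)
  symm := ⟨fun _ _ h => Ne.symm h⟩
  loopless := ⟨fun _ h => h rfl⟩

/-- Canonical subset of `K_{L,R}` with `i` left vertices and `j` right vertices. -/
def canonSet (n L i j : ℕ) : Finset (Fin n) :=
  ({v | v.val < i} : Finset (Fin n)) ∪ ({v | L ≤ v.val ∧ v.val < L + j} : Finset (Fin n))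

/-- `u(i,j) = (λ/λ_e)·v(i,j)` for the complete bipartite graph `K_{L, n-L}`. -/
noncomputable def uIJ (lam_e lam : ℝ) (n L i j : ℕ) : ℝ :=
  (lam / lam_e) * vAge lam_e lam (biGraph n L) (canonSet n L i j)

/-- The number of edges of `G` with exactly one endpoint in `S`. -/
noncomputable def edgeBoundary {n : ℕ} (G : SimpleGraph (Fin n)) (S : Finset (Fin n)) : ℕ :=
  ∑ i ∈ S, ((G.neighborFinset i).filter fun j => j ∉ S).card

/-- The probability, under the Erdős–Rényi measure `G(n,p)`, of a set `A` of graphs. -/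
noncomputable def erProb (n : ℕ) (p : ℝ) (A : Finset (SimpleGraph (Fin n))) : ℝ :=
  ∑ G ∈ A, p ^ G.edgeFinset.card * (1 - p) ^ (n.choose 2 - G.edgeFinset.card)

set_option maxHeartbeats 1000000

def lcard (n L : ℕ) (S : Finset (Fin n)) : ℕ := (S.filter fun v => v.val < L).card
def rcard (n L : ℕ) (S : Finset (Fin n)) : ℕ := (S.filter fun v => ¬ v.val < L).card

section Aux

lemma rate_nonneg {n : ℕ} {lam : ℝ} (hl : 0 ≤ lam) (G : SimpleGraph (Fin n))
    (S : Finset (Fin n)) (i : Fin n) : 0 ≤ rate lam G S i := by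
  unfold rate; split
  · exact le_refl 0
  · positivity

lemma compl_insert_card_lt {n : ℕ} {S : Finset (Fin n)} {v : Fin n} (hv : v ∈ Sᶜ) :
    (insert v S)ᶜ.card < Sᶜ.card := by
  rw [Finset.compl_insert]
  exact Finset.card_erase_lt_of_mem hv

lemma vAge_nonneg {lam_e lam : ℝ} (he : 0 ≤ lam_e) (hl : 0 ≤ lam) {n : ℕ}
    (G : SimpleGraph (Fin n)) (S : Finset (Fin n)) : 0 ≤ vAge lam_e lam G S := by
  suffices H : ∀ m (S : Finset (Fin n)), Sᶜ.card = m → 0 ≤ vAge lam_e lam G S from H _ S rfl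
  intro m
  induction m using Nat.strong_induction_on with
  | _ m ih =>
    intro S hS
    rw [vAge]
    apply div_nonneg
    · apply add_nonneg he
      apply Finset.sum_nonneg
      intro i _
      exact mul_nonneg (rate_nonneg hl G S i.1)
        (ih _ (hS ▸ compl_insert_card_lt i.2) _ rfl)
    · apply add_nonneg (by positivity)
      exact Finset.sum_nonneg fun i _ => rate_nonneg hl G S i

lemma card_filter_lt (n L : ℕ) (h : L ≤ n) :
    ((univ : Finset (Fin n)).filter fun w => w.val < L).card = L := by
  rw [← Finset.card_range L]
  apply Finset.card_bij (fun w _ => w.val)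
  · intro a ha; simp only [mem_filter] at ha; simpa using ha.2
  · intro a ha b hb hab; exact Fin.val_injective hab
  · intro b hb
    refine ⟨⟨b, lt_of_lt_of_le (mem_range.1 hb) h⟩, ?_, rfl⟩
    simp [mem_range.1 hb]

lemma card_filter_not_lt (n L : ℕ) (h : L ≤ n) :
    ((univ : Finset (Fin n)).filter fun w => ¬ w.val < L).card = n - L := by
  have h2 := Finset.card_filter_add_card_filter_not (s := (univ : Finset (Fin n)))
    (p := fun w => w.val < L)
  rw [card_filter_lt n L h, Finset.card_univ, Fintype.card_fin] at h2
  omega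

lemma biGraph_neighborFinset (n L : ℕ) (v : Fin n) :
    (biGraph n L).neighborFinset v
      = (univ : Finset (Fin n)).filter fun w => ¬ ((v.val < L) ↔ (w.val < L)) := by
  ext w
  simp only [SimpleGraph.mem_neighborFinset, Finset.mem_filter, Finset.mem_univ, true_and]
  exact not_congr eq_iff_iff

lemma biGraph_degree_left (n L : ℕ) (h : L ≤ n) (v : Fin n) (hv : v.val < L) :
    (biGraph n L).degree v = n - L := by
  rw [← SimpleGraph.card_neighborFinset_eq_degree, biGraph_neighborFinset]
  have e : ((univ : Finset (Fin n)).filter fun w => ¬ ((v.val < L) ↔ (w.val < L)))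
      = (univ : Finset (Fin n)).filter fun w => ¬ w.val < L := by
    apply Finset.filter_congr; intro w _; constructor <;> intro hh <;> tauto
  rw [e, card_filter_not_lt n L h]

lemma biGraph_degree_right (n L : ℕ) (h : L ≤ n) (v : Fin n) (hv : ¬ v.val < L) :
    (biGraph n L).degree v = L := by
  rw [← SimpleGraph.card_neighborFinset_eq_degree, biGraph_neighborFinset]
  have e : ((univ : Finset (Fin n)).filter fun w => ¬ ((v.val < L) ↔ (w.val < L)))
      = (univ : Finset (Fin n)).filter fun w => w.val < L := by
    apply Finset.filter_congr; intro w _; constructor <;> intro hh <;> tauto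
  rw [e, card_filter_lt n L h]

lemma neighbor_inter_card (n L : ℕ) (v : Fin n) (S : Finset (Fin n)) :
    ((biGraph n L).neighborFinset v ∩ S).card
      = if v.val < L then rcard n L S else lcard n L S := by
  rw [biGraph_neighborFinset]
  by_cases hv : v.val < L
  · rw [if_pos hv]
    unfold rcard
    congr 1
    ext w
    simp only [Finset.mem_inter, Finset.mem_filter, Finset.mem_univ, true_and]
    constructor
    · rintro ⟨h1, h2⟩; exact ⟨h2, fun hw => h1 (iff_of_true hv hw)⟩
    · rintro ⟨h1, h2⟩; exact ⟨fun hh => h2 (hh.1 hv), h1⟩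
  · rw [if_neg hv]
    unfold lcard
    congr 1
    ext w
    simp only [Finset.mem_inter, Finset.mem_filter, Finset.mem_univ, true_and]
    constructor
    · rintro ⟨h1, h2⟩
      refine ⟨h2, ?_⟩
      by_contra hw
      exact h1 (iff_of_false hv hw)
    · rintro ⟨h1, h2⟩; exact ⟨fun hh => hv (hh.2 h2), h1⟩

lemma rate_eq (n L : ℕ) (lam : ℝ) (h1 : 1 ≤ L) (hLn : L < n)
    (S : Finset (Fin n)) (v : Fin n) :
    rate lam (biGraph n L) S v
      = if v.val < L then lam * (rcard n L S : ℝ) / ((n:ℝ) - L)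
        else lam * (lcard n L S : ℝ) / (L : ℝ) := by
  have hcast : ((n - L : ℕ) : ℝ) = (n:ℝ) - L := by
    rw [Nat.cast_sub hLn.le]
  unfold rate
  by_cases hv : v.val < L
  · rw [biGraph_degree_left n L hLn.le v hv, if_neg (by omega), if_pos hv,
      neighbor_inter_card, if_pos hv, hcast]
  · rw [biGraph_degree_right n L hLn.le v hv, if_neg (by omega), if_neg hv,
      neighbor_inter_card, if_neg hv]

lemma sum_ite_side (n L : ℕ) (T : Finset (Fin n)) (x y : ℝ) :
    ∑ v ∈ T, (if v.val < L then x else y)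
      = ((T.filter fun v => v.val < L).card : ℝ) * x
        + ((T.filter fun v => ¬ v.val < L).card : ℝ) * y := by
  rw [Finset.sum_ite]
  simp [Finset.sum_const, nsmul_eq_mul]

lemma compl_lcard (n L : ℕ) (h : L ≤ n) (S : Finset (Fin n)) :
    (Sᶜ.filter fun v : Fin n => v.val < L).card = L - lcard n L S := by
  have hd : Disjoint (S.filter fun v : Fin n => v.val < L)
      (Sᶜ.filter fun v : Fin n => v.val < L) :=
    Finset.disjoint_filter_filter disjoint_compl_right
  have hu : (S.filter fun v : Fin n => v.val < L) ∪ (Sᶜ.filter fun v : Fin n => v.val < L)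
      = (univ : Finset (Fin n)).filter fun v => v.val < L := by
    rw [← Finset.filter_union, Finset.union_compl]
  have := Finset.card_union_of_disjoint hd
  rw [hu, card_filter_lt n L h] at this
  unfold lcard
  omega

lemma compl_rcard (n L : ℕ) (h : L ≤ n) (S : Finset (Fin n)) :
    (Sᶜ.filter fun v : Fin n => ¬ v.val < L).card = (n - L) - rcard n L S := by
  have hd : Disjoint (S.filter fun v : Fin n => ¬ v.val < L)
      (Sᶜ.filter fun v : Fin n => ¬ v.val < L) :=
    Finset.disjoint_filter_filter disjoint_compl_right
  have hu : (S.filter fun v : Fin n => ¬ v.val < L) ∪ (Sᶜ.filter fun v : Fin n => ¬ v.val < L)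
      = (univ : Finset (Fin n)).filter fun v => ¬ v.val < L := by
    rw [← Finset.filter_union, Finset.union_compl]
  have := Finset.card_union_of_disjoint hd
  rw [hu, card_filter_not_lt n L h] at this
  unfold rcard
  omega

lemma lcard_le (n L : ℕ) (h : L ≤ n) (S : Finset (Fin n)) : lcard n L S ≤ L := by
  unfold lcard
  have h3 := Finset.card_le_card
    (Finset.filter_subset_filter (fun v : Fin n => v.val < L) (Finset.subset_univ S))
  rwa [card_filter_lt n L h] at h3

lemma rcard_le (n L : ℕ) (h : L ≤ n) (S : Finset (Fin n)) : rcard n L S ≤ n - L := by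
  unfold rcard
  have h3 := Finset.card_le_card
    (Finset.filter_subset_filter (fun v : Fin n => ¬ v.val < L) (Finset.subset_univ S))
  rwa [card_filter_not_lt n L h] at h3

lemma lcard_add_rcard (n L : ℕ) (S : Finset (Fin n)) :
    lcard n L S + rcard n L S = S.card :=
  Finset.card_filter_add_card_filter_not _

lemma lcard_insert (n L : ℕ) (S : Finset (Fin n)) (v : Fin n) (hv : v ∉ S) :
    lcard n L (insert v S) = if v.val < L then lcard n L S + 1 else lcard n L S := by
  unfold lcard
  rw [Finset.filter_insert]
  by_cases h : v.val < L
  · rw [if_pos h, if_pos h, Finset.card_insert_of_notMem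
      (fun hmem => hv (Finset.mem_of_mem_filter v hmem))]
  · rw [if_neg h, if_neg h]

lemma rcard_insert (n L : ℕ) (S : Finset (Fin n)) (v : Fin n) (hv : v ∉ S) :
    rcard n L (insert v S) = if v.val < L then rcard n L S else rcard n L S + 1 := by
  unfold rcard
  rw [Finset.filter_insert]
  by_cases h : v.val < L
  · rw [if_neg (by simpa using h), if_pos h]
  · rw [if_pos h, if_neg h, Finset.card_insert_of_notMem
      (fun hmem => hv (Finset.mem_of_mem_filter v hmem))]

end Aux
open Finset
open scoped Classical

noncomputable def fF (n L R i j : ℕ) : ℝ :=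
  4 + 4*(Real.log L - Real.log (max i 1)) + 4*(Real.log R - Real.log (max j 1))
    + (if i = 0 then (n:ℝ)/((L:ℝ)*(j:ℝ)) else 0)

lemma log_succ_ge (k : ℕ) (hk : 1 ≤ k) :
    1/((k:ℝ)+1) ≤ Real.log ((k:ℝ)+1) - Real.log k := by
  have hk0 : (0:ℝ) < k := by exact_mod_cast hk
  have h1 : (0:ℝ) < (k:ℝ)/((k:ℝ)+1) := by positivity
  have h2 := Real.log_le_sub_one_of_pos h1
  rw [Real.log_div (by positivity) (by positivity)] at h2
  have h3 : (k:ℝ)/((k:ℝ)+1) - 1 = -(1/((k:ℝ)+1)) := by field_simp; ring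
  linarith [h3 ▸ h2]

lemma fF_ge (n L R i j : ℕ) (hL : 1 ≤ L) (hR : 1 ≤ R) (hi : i ≤ L) (hj : j ≤ R) :
    4 ≤ fF n L R i j := by
  unfold fF
  have h1 : Real.log (max (i:ℝ) 1) ≤ Real.log L := by
    apply Real.log_le_log (by positivity)
    have h : ((max (i:ℝ) 1)) ≤ L := by
      apply max_le (by exact_mod_cast hi) (by exact_mod_cast hL)
    exact h
  have h2 : Real.log (max (j:ℝ) 1) ≤ Real.log R := by
    apply Real.log_le_log (by positivity)
    exact max_le (by exact_mod_cast hj) (by exact_mod_cast hR)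
  have h3 : (0:ℝ) ≤ (if i = 0 then (n:ℝ)/((L:ℝ)*(j:ℝ)) else 0) := by
    split <;> positivity
  linarith

lemma fF_deltaI (n L R i j : ℕ) (hi : 1 ≤ i) :
    4/((i:ℝ)+1) ≤ fF n L R i j - fF n L R (i+1) j := by
  unfold fF
  have hi0 : (1:ℝ) ≤ (i:ℝ) := by exact_mod_cast hi
  have e1 : max (i:ℝ) 1 = (i:ℝ) := max_eq_left hi0
  have e2 : max ((i:ℝ)+1) 1 = (i:ℝ)+1 := max_eq_left (by linarith)
  rw [if_neg (by omega : ¬ i = 0), if_neg (by omega : ¬ i + 1 = 0)]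
  push_cast
  rw [e1, e2]
  have hlog := log_succ_ge i hi
  have h4 : 4/((i:ℝ)+1) = 4*(1/((i:ℝ)+1)) := by ring
  linarith

lemma fF_deltaI0 (n L R j : ℕ) :
    fF n L R 0 j - fF n L R 1 j = (n:ℝ)/((L:ℝ)*(j:ℝ)) := by
  unfold fF
  norm_num

lemma fF_deltaJ (n L R i j : ℕ) (hL : 1 ≤ L) (hj : 1 ≤ j) :
    4/((j:ℝ)+1) ≤ fF n L R i j - fF n L R i (j+1) := by
  unfold fF
  have hj0 : (1:ℝ) ≤ (j:ℝ) := by exact_mod_cast hj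
  have hL0 : (1:ℝ) ≤ (L:ℝ) := by exact_mod_cast hL
  have e1 : max (j:ℝ) 1 = (j:ℝ) := max_eq_left hj0
  have e2 : max (((j+1 : ℕ)):ℝ) 1 = (((j+1 : ℕ)):ℝ) := by
    apply max_eq_left; push_cast; linarith
  have hlog := log_succ_ge j hj
  have hind : (if i = 0 then (n:ℝ)/((L:ℝ)*(((j+1 : ℕ)):ℝ)) else 0)
      ≤ (if i = 0 then (n:ℝ)/((L:ℝ)*(j:ℝ)) else 0) := by
    split
    · rw [div_le_div_iff₀ (by positivity) (by push_cast; positivity)]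
      push_cast
      have hn0 : (0:ℝ) ≤ (n:ℝ) := by positivity
      nlinarith
    · exact le_refl 0
  rw [e1, e2]
  have h4 : 4/((j:ℝ)+1) = 4*(1/((j:ℝ)+1)) := by ring
  have e3 : (((j+1 : ℕ)):ℝ) = (j:ℝ)+1 := by push_cast; ring
  rw [e3] at hind ⊢
  linarith

lemma key1 (N L R I J f f1 f2 : ℝ) (hL1 : 1 ≤ L) (h2L : 2*L ≤ N) (hR : R = N - L)
    (hI1 : 1 ≤ I) (hIL : I ≤ L) (hJ1 : 1 ≤ J) (hJR : J ≤ R) (hf : 4 ≤ f)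
    (hd1 : 4/(I+1) ≤ f - f1) (hd2 : 4/(J+1) ≤ f - f2) :
    1 + (L-I)*J/(N-L) * f1 + (R-J)*I/L * f2
      ≤ f * ((I+J)/N + (L-I)*J/(N-L) + (R-J)*I/L) := by
  have hL0 : (0:ℝ) < L := by linarith
  have hN : (0:ℝ) < N := by linarith
  have hNL : (0:ℝ) < N - L := by linarith
  have hR2 : N/2 ≤ R := by rw [hR]; linarith
  have hI0 : (0:ℝ) < I := by linarith
  have hJ0 : (0:ℝ) < J := by linarith
  set a := (L-I)*J/(N-L) with ha_def
  set b := (R-J)*I/L with hb_def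
  have ha : 0 ≤ a := by apply div_nonneg; nlinarith; linarith
  have hb : 0 ≤ b := by apply div_nonneg; nlinarith; linarith
  have hd1' : 0 ≤ f - f1 := le_trans (by positivity) hd1
  have hd2' : 0 ≤ f - f2 := le_trans (by positivity) hd2
  have hmain : 1 ≤ a*(f-f1) + b*(f-f2) + f*((I+J)/N) := by
    by_cases hcase : R ≤ 2*J
    · have h1 : 1/4 ≤ (I+J)/N := by
        rw [le_div_iff₀ hN]; nlinarith
      have h2 : 1 ≤ f*((I+J)/N) := by nlinarith
      have t1 : 0 ≤ a*(f-f1) := mul_nonneg ha hd1'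
      have t2 : 0 ≤ b*(f-f2) := mul_nonneg hb hd2'
      linarith
    · push_neg at hcase
      by_cases hcase2 : L ≤ 2*I
      · have hb2 : J/2 ≤ b := by
          rw [hb_def, le_div_iff₀ hL0]
          nlinarith
        have hd2'' : 2/J ≤ 4/(J+1) := by
          rw [div_le_div_iff₀ (by linarith) (by linarith)]
          nlinarith
        have h5 : 1 ≤ b*(f-f2) := by
          have : (J/2)*(2/J) ≤ b*(f-f2) := by
            apply mul_le_mul hb2 (le_trans hd2'' hd2) (by positivity) hb
          have e : (J/2)*(2/J) = 1 := by field_simp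
          linarith [e ▸ this]
        have t1 : 0 ≤ a*(f-f1) := mul_nonneg ha hd1'
        have t3 : 0 ≤ f*((I+J)/N) := by positivity
        linarith
      · push_neg at hcase2
        set X := L*J/(N*I) with hX_def
        set Y := R*I/(L*J) with hY_def
        have hX0 : 0 < X := by rw [hX_def]; positivity
        have hY0 : 0 < Y := by
          rw [hY_def]
          have hR0 : 0 < R := by linarith
          positivity
        have hXY : 1/2 ≤ X*Y := by
          rw [hX_def, hY_def]
          have e : L*J/(N*I) * (R*I/(L*J)) = R/N := by
            field_simp
          rw [e, le_div_iff₀ hN]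
          linarith
        have hXa : X ≤ a*(4/(I+1)) := by
          rw [hX_def, ha_def, div_mul_div_comm, div_le_div_iff₀ (by positivity) (by positivity)]
          have k1 : (N-L)*(I+1) ≤ N*(2*I) := by nlinarith
          have k2 : L*(N*(2*I)) ≤ (L-I)*4*(N*I) := by nlinarith [mul_pos hN hI0]
          linarith [mul_le_mul_of_nonneg_left k1 (by positivity : (0:ℝ) ≤ L*J),
            mul_le_mul_of_nonneg_left k2 hJ0.le]
        have hYb : Y ≤ b*(4/(J+1)) := by
          rw [hY_def, hb_def, div_mul_div_comm, div_le_div_iff₀ (by positivity) (by positivity)]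
          have hR0 : (0:ℝ) < R := by linarith
          have k1 : L*(J+1) ≤ L*(2*J) := by nlinarith
          have k2 : R*(L*(2*J)) ≤ (R-J)*4*(L*J) := by nlinarith [mul_pos hL0 hJ0]
          linarith [mul_le_mul_of_nonneg_left k1 (by positivity : (0:ℝ) ≤ R*I),
            mul_le_mul_of_nonneg_left k2 hI0.le]
        have hsum : 1 ≤ X + Y := by
          have hs : 2 ≤ (X+Y)^2 := by nlinarith [sq_nonneg (X-Y)]
          nlinarith [add_pos hX0 hY0]
        have t1 : a*(4/(I+1)) ≤ a*(f-f1) := mul_le_mul_of_nonneg_left hd1 ha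
        have t2 : b*(4/(J+1)) ≤ b*(f-f2) := mul_le_mul_of_nonneg_left hd2 hb
        have t3 : 0 ≤ f*((I+J)/N) := by positivity
        linarith
  have expand : f * ((I+J)/N + a + b) - (1 + a*f1 + b*f2)
      = a*(f-f1) + b*(f-f2) + f*((I+J)/N) - 1 := by ring
  linarith

lemma key0 (N L R J f f1 : ℝ) (hL1 : 1 ≤ L) (h2L : 2*L ≤ N) (hR : R = N - L)
    (hJ1 : 1 ≤ J) (hf : 4 ≤ f) (hd1 : f - f1 = N/(L*J)) :
    1 + L*J/(N-L) * f1 ≤ f * (J/N + L*J/(N-L)) := by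
  have hL0 : (0:ℝ) < L := by linarith
  have hN : (0:ℝ) < N := by linarith
  have hNL : (0:ℝ) < N - L := by linarith
  have hJ0 : (0:ℝ) < J := by linarith
  have h1 : L*J/(N-L) * (f - f1) = N/(N-L) := by
    rw [hd1]
    field_simp
  have h2 : (1:ℝ) ≤ N/(N-L) := by
    rw [le_div_iff₀ hNL]; linarith
  have h3 : 0 ≤ f * (J/N) := by positivity
  have expand : f * (J/N + L*J/(N-L)) - (1 + L*J/(N-L)*f1)
      = L*J/(N-L)*(f - f1) + f*(J/N) - 1 := by ring
  linarith

lemma keyN (n L i j : ℕ) (h1 : 1 ≤ L) (h2 : 2*L ≤ n) (hi : i ≤ L) (hj : 1 ≤ j)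
    (hjR : j ≤ n - L) :
    1 + ((L:ℝ)-i)*j/((n:ℝ)-L) * fF n L (n-L) (i+1) j
      + (((n:ℝ)-L)-j)*i/(L:ℝ) * fF n L (n-L) i (j+1)
      ≤ fF n L (n-L) i j
        * (((i:ℝ)+j)/n + ((L:ℝ)-i)*j/((n:ℝ)-L) + (((n:ℝ)-L)-j)*i/(L:ℝ)) := by
  have hRL : 1 ≤ n - L := by omega
  have hcast : ((n - L : ℕ) : ℝ) = (n:ℝ) - L := by
    rw [Nat.cast_sub (by omega)]
  have hL1 : (1:ℝ) ≤ (L:ℝ) := by exact_mod_cast h1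
  have h2L : 2*(L:ℝ) ≤ (n:ℝ) := by exact_mod_cast h2
  have hJ1 : (1:ℝ) ≤ (j:ℝ) := by exact_mod_cast hj
  have hJR : (j:ℝ) ≤ (n:ℝ) - L := by rw [← hcast]; exact_mod_cast hjR
  have hf : 4 ≤ fF n L (n-L) i j := fF_ge n L (n-L) i j h1 hRL hi hjR
  rcases Nat.eq_zero_or_pos i with hi0 | hipos
  · subst hi0
    have hd1 : fF n L (n-L) 0 j - fF n L (n-L) 1 j = (n:ℝ)/((L:ℝ)*(j:ℝ)) :=
      fF_deltaI0 n L (n-L) j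
    have K := key0 (n:ℝ) (L:ℝ) ((n:ℝ)-L) (j:ℝ) (fF n L (n-L) 0 j) (fF n L (n-L) 1 j)
      hL1 h2L rfl hJ1 hf hd1
    have e1 : 1 + ((L:ℝ)-(0:ℕ))*j/((n:ℝ)-L) * fF n L (n-L) (0+1) j
        + (((n:ℝ)-L)-j)*(0:ℕ)/(L:ℝ) * fF n L (n-L) 0 (j+1)
        = 1 + (L:ℝ)*j/((n:ℝ)-L) * fF n L (n-L) 1 j := by
      push_cast; ring
    have e2 : fF n L (n-L) 0 j
        * (((0:ℕ):ℝ)+j)/n = fF n L (n-L) 0 j * ((j:ℝ)/n) := by push_cast; ring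
    have e3 : fF n L (n-L) 0 j
        * ((((0:ℕ):ℝ)+j)/n + ((L:ℝ)-(0:ℕ))*j/((n:ℝ)-L) + (((n:ℝ)-L)-j)*(0:ℕ)/(L:ℝ))
        = fF n L (n-L) 0 j * ((j:ℝ)/n + (L:ℝ)*j/((n:ℝ)-L)) := by
      push_cast; ring
    rw [e1, e3]
    exact K
  · have hI1 : (1:ℝ) ≤ (i:ℝ) := by exact_mod_cast hipos
    have hIL : (i:ℝ) ≤ (L:ℝ) := by exact_mod_cast hi
    have hd1 := fF_deltaI n L (n-L) i j hipos
    have hd2 := fF_deltaJ n L (n-L) i j h1 hj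
    exact key1 (n:ℝ) (L:ℝ) ((n:ℝ)-L) (i:ℝ) (j:ℝ) (fF n L (n-L) i j)
      (fF n L (n-L) (i+1) j) (fF n L (n-L) i (j+1))
      hL1 h2L rfl hI1 hIL hJ1 hJR hf hd1 hd2

lemma vAge_upper (n L : ℕ) (lam_e lam : ℝ) (he : 0 < lam_e) (hl : 0 < lam)
    (h1 : 1 ≤ L) (h2 : 2*L ≤ n) :
    ∀ m (S : Finset (Fin n)), Sᶜ.card = m → 1 ≤ rcard n L S →
      vAge lam_e lam (biGraph n L) S
        ≤ (lam_e/lam) * fF n L (n-L) (lcard n L S) (rcard n L S) := by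
  intro m
  induction m using Nat.strong_induction_on with
  | _ m ih =>
    intro S hS hr
    have hLn : L < n := by omega
    have hn0 : 0 < n := by omega
    set i := lcard n L S with hi_def
    set j := rcard n L S with hj_def
    have hiL : i ≤ L := lcard_le n L hLn.le S
    have hjR : j ≤ n - L := rcard_le n L hLn.le S
    have hcard : S.card = i + j := (lcard_add_rcard n L S).symm
    have hNL0 : (0:ℝ) < (n:ℝ) - L := by
      have : (L:ℝ) < (n:ℝ) := by exact_mod_cast hLn
      linarith
    have hL0 : (0:ℝ) < (L:ℝ) := by exact_mod_cast h1
    have hn0' : (0:ℝ) < (n:ℝ) := by exact_mod_cast hn0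
    rw [vAge]
    rw [Finset.sum_attach Sᶜ
      (fun v => rate lam (biGraph n L) S v * vAge lam_e lam (biGraph n L) (insert v S))]
    -- elementwise bound on the numerator sum
    have hbound : ∀ v ∈ Sᶜ, rate lam (biGraph n L) S v
          * vAge lam_e lam (biGraph n L) (insert v S)
        ≤ (if v.val < L then (lam * (j:ℝ) / ((n:ℝ)-L)) * ((lam_e/lam) * fF n L (n-L) (i+1) j)
           else (lam * (i:ℝ) / (L:ℝ)) * ((lam_e/lam) * fF n L (n-L) i (j+1))) := by
      intro v hv
      have hvS : v ∉ S := Finset.mem_compl.1 hv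
      have hm : (insert v S)ᶜ.card < m := hS ▸ compl_insert_card_lt hv
      have hrate := rate_eq n L lam h1 hLn S v
      by_cases hvL : v.val < L
      · rw [if_pos hvL, hrate, if_pos hvL]
        apply mul_le_mul_of_nonneg_left ?_ (by positivity)
        have hih := ih _ hm (insert v S) rfl ?_
        · rwa [lcard_insert n L S v hvS, rcard_insert n L S v hvS,
            if_pos hvL, if_pos hvL] at hih
        · rwa [rcard_insert n L S v hvS, if_pos hvL]
      · rw [if_neg hvL, hrate, if_neg hvL]
        apply mul_le_mul_of_nonneg_left ?_ (by positivity)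
        have hih := ih _ hm (insert v S) rfl ?_
        · rwa [lcard_insert n L S v hvS, rcard_insert n L S v hvS,
            if_neg hvL, if_neg hvL] at hih
        · rw [rcard_insert n L S v hvS, if_neg hvL]
          omega
    have hsum1 : ∑ v ∈ Sᶜ,
        (if v.val < L then (lam * (j:ℝ) / ((n:ℝ)-L)) * ((lam_e/lam) * fF n L (n-L) (i+1) j)
         else (lam * (i:ℝ) / (L:ℝ)) * ((lam_e/lam) * fF n L (n-L) i (j+1)))
        = ((L - i : ℕ):ℝ) * ((lam * (j:ℝ) / ((n:ℝ)-L)) * ((lam_e/lam) * fF n L (n-L) (i+1) j))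
          + (((n-L) - j : ℕ):ℝ) * ((lam * (i:ℝ) / (L:ℝ)) * ((lam_e/lam) * fF n L (n-L) i (j+1))) := by
      rw [sum_ite_side, compl_lcard n L hLn.le S, compl_rcard n L hLn.le S]
    have hsumrate : ∑ v ∈ Sᶜ, rate lam (biGraph n L) S v
        = ((L - i : ℕ):ℝ) * (lam * (j:ℝ) / ((n:ℝ)-L))
          + (((n-L) - j : ℕ):ℝ) * (lam * (i:ℝ) / (L:ℝ)) := by
      rw [Finset.sum_congr rfl (fun v _ => rate_eq n L lam h1 hLn S v), sum_ite_side,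
        compl_lcard n L hLn.le S, compl_rcard n L hLn.le S]
    have hcastLi : ((L - i : ℕ):ℝ) = (L:ℝ) - i := by rw [Nat.cast_sub hiL]
    have hcastRj : (((n-L) - j : ℕ):ℝ) = ((n:ℝ) - L) - j := by
      rw [Nat.cast_sub hjR, Nat.cast_sub hLn.le]
    have hScard : ((S.card : ℕ):ℝ) = (i:ℝ) + j := by rw [hcard]; push_cast; ring
    -- denominator is positive
    have hD : 0 < lam * (S.card : ℝ) / (n : ℝ) + ∑ v ∈ Sᶜ, rate lam (biGraph n L) S v := by
      have hc1 : 0 < lam * (S.card : ℝ) / (n : ℝ) := by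
        have : (0:ℝ) < (S.card : ℝ) := by
          have : 1 ≤ S.card := by omega
          exact_mod_cast Nat.lt_of_lt_of_le Nat.zero_lt_one this
        positivity
      have hc2 : 0 ≤ ∑ v ∈ Sᶜ, rate lam (biGraph n L) S v :=
        Finset.sum_nonneg fun v _ => rate_nonneg hl.le _ S v
      linarith
    rw [div_le_iff₀ hD]
    have hnum_le := Finset.sum_le_sum hbound
    rw [hsum1] at hnum_le
    -- key inequality, scaled by lam_e
    have K := keyN n L i j h1 h2 hiL hr hjR
    have K' := mul_le_mul_of_nonneg_left K he.le
    have hlam0 : lam ≠ 0 := ne_of_gt hl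
    have hn0'' : (n:ℝ) ≠ 0 := ne_of_gt hn0'
    have hNL0' : (n:ℝ) - L ≠ 0 := ne_of_gt hNL0
    have hL0' : (L:ℝ) ≠ 0 := ne_of_gt hL0
    have eL : lam_e * (1 + ((L:ℝ)-i)*j/((n:ℝ)-L) * fF n L (n-L) (i+1) j
        + (((n:ℝ)-L)-j)*i/(L:ℝ) * fF n L (n-L) i (j+1))
        = lam_e + ((L:ℝ)-i) * ((lam * (j:ℝ) / ((n:ℝ)-L)) * ((lam_e/lam) * fF n L (n-L) (i+1) j))
          + (((n:ℝ)-L)-j) * ((lam * (i:ℝ) / (L:ℝ)) * ((lam_e/lam) * fF n L (n-L) i (j+1))) := by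
      field_simp
    have eR : lam_e * (fF n L (n-L) i j
        * (((i:ℝ)+j)/n + ((L:ℝ)-i)*j/((n:ℝ)-L) + (((n:ℝ)-L)-j)*i/(L:ℝ)))
        = (lam_e/lam) * fF n L (n-L) i j
          * (lam * ((i:ℝ)+j) / (n:ℝ) + (((L:ℝ)-i) * (lam * (j:ℝ) / ((n:ℝ)-L))
            + (((n:ℝ)-L)-j) * (lam * (i:ℝ) / (L:ℝ)))) := by
      field_simp
      ring
    rw [eL, eR] at K'
    rw [hcastLi, hcastRj] at hnum_le
    rw [hsumrate, hcastLi, hcastRj, hScard]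
    linarith [hnum_le, K']

lemma lcard_singleton (n L : ℕ) (v : Fin n) (hv : ¬ v.val < L) : lcard n L {v} = 0 := by
  unfold lcard
  rw [Finset.filter_singleton, if_neg hv]
  rfl

lemma rcard_singleton (n L : ℕ) (v : Fin n) (hv : ¬ v.val < L) : rcard n L {v} = 1 := by
  unfold rcard
  rw [Finset.filter_singleton, if_pos hv]
  rfl

lemma vAge_lower (n L : ℕ) (lam_e lam : ℝ) (he : 0 < lam_e) (hl : 0 < lam)
    (h1 : 1 ≤ L) (h2 : 2*L ≤ n) (v : Fin n) (hv : ¬ v.val < L) :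
    lam_e * (n:ℝ) / (3 * lam * L) ≤ vAge lam_e lam (biGraph n L) {v} := by
  have hLn : L < n := by omega
  have hn0' : (0:ℝ) < (n:ℝ) := by exact_mod_cast (by omega : 0 < n)
  have hL0 : (0:ℝ) < (L:ℝ) := by exact_mod_cast h1
  have hNL0 : (0:ℝ) < (n:ℝ) - L := by
    have : (L:ℝ) < (n:ℝ) := by exact_mod_cast hLn
    linarith
  have h2L' : 2*(L:ℝ) ≤ (n:ℝ) := by exact_mod_cast h2
  rw [vAge]
  have hsumrate : ∑ w ∈ ({v} : Finset (Fin n))ᶜ, rate lam (biGraph n L) {v} w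
      = ((L - lcard n L {v} : ℕ):ℝ) * (lam * (rcard n L {v} : ℝ) / ((n:ℝ)-L))
        + (((n-L) - rcard n L {v} : ℕ):ℝ) * (lam * (lcard n L {v} : ℝ) / (L:ℝ)) := by
    rw [Finset.sum_congr rfl (fun w _ => rate_eq n L lam h1 hLn {v} w), sum_ite_side,
      compl_lcard n L hLn.le _, compl_rcard n L hLn.le _]
  rw [lcard_singleton n L v hv, rcard_singleton n L v hv] at hsumrate
  have hsum_eq : ∑ w ∈ ({v} : Finset (Fin n))ᶜ, rate lam (biGraph n L) {v} w
      = (L:ℝ) * (lam / ((n:ℝ)-L)) := by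
    rw [hsumrate]
    norm_num
  have hNum : 0 ≤ ∑ w ∈ ({v} : Finset (Fin n))ᶜ.attach,
      rate lam (biGraph n L) {v} w.1 * vAge lam_e lam (biGraph n L) (insert w.1 {v}) := by
    apply Finset.sum_nonneg
    intro w _
    exact mul_nonneg (rate_nonneg hl.le _ _ _) (vAge_nonneg he.le hl.le _ _)
  have hcards : (({v} : Finset (Fin n)).card : ℝ) = 1 := by
    rw [Finset.card_singleton]; norm_num
  rw [hsum_eq, hcards]
  have hD : (0:ℝ) < lam * 1 / n + (L:ℝ) * (lam / ((n:ℝ)-L)) := by positivity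
  have step1 : lam_e * (n:ℝ) / (3 * lam * L)
      ≤ lam_e / (lam * 1 / n + (L:ℝ) * (lam / ((n:ℝ)-L))) := by
    rw [div_le_div_iff₀ (by positivity) hD]
    have hDle : lam * 1 / n + (L:ℝ) * (lam / ((n:ℝ)-L)) ≤ 3*lam*(L:ℝ)/n := by
      have t1 : (L:ℝ) * (lam / ((n:ℝ)-L)) ≤ 2*lam*(L:ℝ)/n := by
        rw [mul_div_assoc', div_le_div_iff₀ hNL0 hn0']
        nlinarith [mul_le_mul_of_nonneg_left (show (n:ℝ) ≤ 2*((n:ℝ)-L) by linarith)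
          (mul_nonneg hl.le hL0.le)]
      have t2 : lam * 1 / n ≤ lam*(L:ℝ)/n := by
        rw [div_le_div_iff₀ hn0' hn0']
        have hL1' : (1:ℝ) ≤ (L:ℝ) := by exact_mod_cast h1
        nlinarith [mul_le_mul_of_nonneg_left hL1' (by positivity : (0:ℝ) ≤ lam*(n:ℝ))]
      have t3 : lam * (L:ℝ) / n + 2 * lam * (L:ℝ) / n = 3 * lam * (L:ℝ) / n := by ring
      linarith
    have h6 := mul_le_mul_of_nonneg_left hDle (by positivity : (0:ℝ) ≤ lam_e * n)
    have h7 : lam_e * (n:ℝ) * (3*lam*(L:ℝ)/n) = lam_e*(3*lam*(L:ℝ)) := by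
      field_simp
    linarith
  have step2 : lam_e / (lam * 1 / n + (L:ℝ) * (lam / ((n:ℝ)-L)))
      ≤ (lam_e + ∑ w ∈ ({v} : Finset (Fin n))ᶜ.attach,
          rate lam (biGraph n L) {v} w.1 * vAge lam_e lam (biGraph n L) (insert w.1 {v}))
        / (lam * 1 / n + (L:ℝ) * (lam / ((n:ℝ)-L))) := by
    rw [div_le_div_iff_of_pos_right hD]
    linarith
  linarith

lemma fF01 (n L : ℕ) :
    fF n L (n-L) 0 1 = 4 + 4*Real.log L + 4*Real.log ((n-L:ℕ):ℝ) + (n:ℝ)/(L:ℝ) := by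
  unfold fF
  norm_num

/-- If `|L| = ⌈n^α⌉` with `α ∈ (0,1)`, every right vertex of
`K_{L,R}` has version age between `c·n^{1-α}` and `C·n^{1-α}·log n`. -/
theorem stmt_2 (lam_e lam : ℝ) (hlam_e : 0 < lam_e) (hlam : 0 < lam)
    (α : ℝ) (hα0 : 0 < α) (hα1 : α < 1) :
    ∃ c C : ℝ, 0 < c ∧ 0 < C ∧ ∃ N : ℕ, ∀ n : ℕ, N ≤ n →
      ∀ j : Fin n, ⌈(n : ℝ) ^ α⌉₊ ≤ j.val →
        c * (n : ℝ) ^ (1 - α) ≤ vAge lam_e lam (biGraph n ⌈(n : ℝ) ^ α⌉₊) {j} ∧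
        vAge lam_e lam (biGraph n ⌈(n : ℝ) ^ α⌉₊) {j} ≤
          C * (n : ℝ) ^ (1 - α) * Real.log n := by
  have hδ : 0 < 1 - α := by linarith
  obtain ⟨N0, hN0⟩ := Filter.eventually_atTop.mp
    (((tendsto_rpow_atTop hδ).comp tendsto_natCast_atTop_atTop).eventually_ge_atTop 4)
  refine ⟨lam_e/(6*lam), 13*(lam_e/lam), by positivity, by positivity, max N0 3, ?_⟩
  intro n hn j hj
  set L := ⌈(n:ℝ)^α⌉₊ with hL_def
  have hn3 : 3 ≤ n := le_trans (le_max_right _ _) hn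
  have hn0' : (0:ℝ) < n := by exact_mod_cast (by omega : 0 < n)
  have hn1 : (1:ℝ) ≤ n := by exact_mod_cast (by omega : 1 ≤ n)
  have hP4 : (4:ℝ) ≤ (n:ℝ)^(1-α) := hN0 n (le_trans (le_max_left _ _) hn)
  have hxpos : (0:ℝ) < (n:ℝ)^α := Real.rpow_pos_of_pos hn0' α
  have hx1 : (1:ℝ) ≤ (n:ℝ)^α := Real.one_le_rpow hn1 hα0.le
  have hL1 : 1 ≤ L := Nat.ceil_pos.mpr hxpos
  have hLge : (n:ℝ)^α ≤ (L:ℝ) := Nat.le_ceil _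
  have hLle : (L:ℝ) ≤ 2*(n:ℝ)^α := by
    have := Nat.ceil_lt_add_one (le_of_lt hxpos)
    rw [← hL_def] at this
    linarith
  have hsplit : (n:ℝ) = (n:ℝ)^α * (n:ℝ)^(1-α) := by
    rw [← Real.rpow_add hn0']
    norm_num
  have hPpos : (0:ℝ) < (n:ℝ)^(1-α) := Real.rpow_pos_of_pos hn0' _
  have h2L : 2*L ≤ n := by
    have h2L' : 2*(L:ℝ) ≤ (n:ℝ) := by nlinarith
    exact_mod_cast h2L'
  have hv : ¬ ((j:Fin n).val < L) := by omega
  have hL0 : (0:ℝ) < (L:ℝ) := by exact_mod_cast hL1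
  constructor
  · -- lower bound
    have hlow := vAge_lower n L lam_e lam hlam_e hlam hL1 h2L j hv
    refine le_trans ?_ hlow
    rw [le_div_iff₀ (by positivity : (0:ℝ) < 3*lam*(L:ℝ))]
    have e : lam_e/(6*lam) * (n:ℝ)^(1-α) * (3*lam*(L:ℝ))
        = lam_e * ((n:ℝ)^(1-α) * (L:ℝ))/2 := by
      field_simp
      ring
    rw [e]
    have h8 : (n:ℝ)^(1-α) * (L:ℝ) ≤ 2*(n:ℝ) := by
      have := mul_le_mul_of_nonneg_left hLle hPpos.le
      nlinarith
    nlinarith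
  · -- upper bound
    have hrc : 1 ≤ rcard n L {j} := by rw [rcard_singleton n L j hv]
    have hup := vAge_upper n L lam_e lam hlam_e hlam hL1 h2L
      (({j} : Finset (Fin n))ᶜ.card) {j} rfl hrc
    rw [lcard_singleton n L j hv, rcard_singleton n L j hv, fF01] at hup
    refine le_trans hup ?_
    have hLn' : L ≤ n := by omega
    have hlogL : Real.log (L:ℝ) ≤ Real.log n := by
      apply Real.log_le_log hL0
      exact_mod_cast hLn'
    have hRL1 : (1:ℝ) ≤ ((n - L : ℕ):ℝ) := by
      have : 1 ≤ n - L := by omega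
      exact_mod_cast this
    have hlogR : Real.log ((n-L:ℕ):ℝ) ≤ Real.log n := by
      apply Real.log_le_log (by linarith)
      have : n - L ≤ n := by omega
      exact_mod_cast this
    have hnL : (n:ℝ)/(L:ℝ) ≤ (n:ℝ)^(1-α) := by
      rw [div_le_iff₀ hL0]
      nlinarith [mul_le_mul_of_nonneg_left hLge hPpos.le]
    have hlog1 : 1 ≤ Real.log n := by
      have h3 : Real.exp 1 < 3 := lt_of_lt_of_le Real.exp_one_lt_d9 (by norm_num)
      have h4 : (1:ℝ) < Real.log 3 := (Real.lt_log_iff_exp_lt (by norm_num)).2 h3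
      have h5 : Real.log 3 ≤ Real.log n := by
        apply Real.log_le_log (by norm_num)
        exact_mod_cast hn3
      linarith
    have hP1 : (1:ℝ) ≤ (n:ℝ)^(1-α) := by linarith
    have k1 : Real.log n ≤ (n:ℝ)^(1-α) * Real.log n := by nlinarith
    have k2 : (n:ℝ)^(1-α) ≤ (n:ℝ)^(1-α) * Real.log n := by nlinarith
    have k3 : (1:ℝ) ≤ (n:ℝ)^(1-α) * Real.log n := by nlinarith
    have final : 4 + 4*Real.log (L:ℝ) + 4*Real.log ((n-L:ℕ):ℝ) + (n:ℝ)/(L:ℝ)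
        ≤ 13*((n:ℝ)^(1-α) * Real.log n) := by
      linarith
    calc (lam_e/lam) * (4 + 4*Real.log (L:ℝ) + 4*Real.log ((n-L:ℕ):ℝ) + (n:ℝ)/(L:ℝ))
        ≤ (lam_e/lam) * (13*((n:ℝ)^(1-α) * Real.log n)) := by
          apply mul_le_mul_of_nonneg_left final (by positivity)
      _ = 13*(lam_e/lam) * (n:ℝ)^(1-α) * Real.log n := by ring
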